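/- Let 0 < x ≤ 1 and y > 0 be real. Then for every t ∈ (0,1], Im √(1 − 1/(x + i t y)) > 0, where √ denotes the principal branch of the complex square root. Consequently G(x,y) < 0, where G(x,y) = −∫₀¹ y²·√(1−t²)·Im √(1 − 1/(x + i t y)) dt. -/

import Mathlib

/-!
For `t > 0` the point `z = x + ity` lies in the upper half plane, hence so does `1 - 1/z`, and the
principal square root maps the upper half plane into itself. The integrand of `-G` is therefore
positive on `(0, 1)`; it is continuous on `(0, 1]` and bounded by `y² √(1 + 1/x)` since
`‖1 - 1/z‖ ≤ 1 + 1/Re z`, so its integral is positive.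
-/

open Complex Set MeasureTheory

namespace Complex

theorem im_cpow_half_pos {w : ℂ} (hw : 0 < w.im) : 0 < (w ^ (1 / 2 : ℂ)).im := by
  have hw0 : w ≠ 0 := fun h => by simp [h] at hw
  have harg_pos : 0 < w.arg :=
    (arg_nonneg_iff.mpr hw.le).lt_of_ne fun h => hw.ne' (arg_eq_zero_iff.mp h.symm).2
  have harg_lt : w.arg < Real.pi := arg_lt_pi_iff.mpr (Or.inr hw.ne')
  have him : (log w * (1 / 2 : ℂ)).im = w.arg / 2 := by
    simp [mul_im, log_im, div_eq_mul_inv]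
  rw [cpow_def_of_ne_zero hw0, exp_im, him]
  exact mul_pos (Real.exp_pos _) (Real.sin_pos_of_pos_of_lt_pi (by linarith) (by linarith))

theorem abs_im_cpow_half_le (w : ℂ) : |(w ^ (1 / 2 : ℂ)).im| ≤ √‖w‖ :=
  calc |(w ^ (1 / 2 : ℂ)).im| ≤ ‖w ^ (1 / 2 : ℂ)‖ := abs_im_le_norm _
    _ = √‖w‖ := by
      rw [show (1 / 2 : ℂ) = ((1 / 2 : ℝ) : ℂ) by push_cast; rfl, norm_cpow_real,
        Real.sqrt_eq_rpow]

theorem im_one_sub_one_div (z : ℂ) : (1 - 1 / z).im = z.im / normSq z := by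
  rw [sub_im, one_im, one_div, inv_im]
  ring

theorem norm_one_sub_one_div_le {z : ℂ} (hz : 0 < z.re) : ‖1 - 1 / z‖ ≤ 1 + 1 / z.re :=
  calc ‖1 - 1 / z‖ ≤ ‖(1 : ℂ)‖ + ‖1 / z‖ := norm_sub_le _ _
    _ = 1 + 1 / ‖z‖ := by rw [norm_one, norm_div, norm_one]
    _ ≤ 1 + 1 / z.re := by
      gcongr
      exact (le_abs_self _).trans (abs_re_le_norm z)

end Complex

theorem intervalIntegral_pos_of_continuousOn_Ioc_of_bounded {f : ℝ → ℝ} {a b M : ℝ}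
    (hab : a < b) (hf : ContinuousOn f (Ioc a b)) (hM : ∀ t ∈ Ioc a b, |f t| ≤ M)
    (hpos : ∀ t ∈ Ioo a b, 0 < f t) : 0 < ∫ t in a..b, f t := by
  refine intervalIntegral.intervalIntegral_pos_of_pos_on ?_ hpos hab
  rw [intervalIntegrable_iff_integrableOn_Ioc_of_le hab.le]
  exact .of_bound measure_Ioc_lt_top (hf.aestronglyMeasurable measurableSet_Ioc) M
    ((ae_restrict_iff' measurableSet_Ioc).mpr (ae_of_all _ hM))

theorem stmt_6 (x y : ℝ) (hx0 : 0 < x) (hy : 0 < y) :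
    (∀ t ∈ Set.Ioc (0 : ℝ) 1,
      0 < (((1 : ℂ) - 1 / ((x : ℂ) + (t : ℂ) * (y : ℂ) * Complex.I)) ^ (1/2 : ℂ)).im)
    ∧ (-(∫ t in (0 : ℝ)..1, y ^ 2 * Real.sqrt (1 - t ^ 2) *
          (((1 : ℂ) - 1 / ((x : ℂ) + (t : ℂ) * (y : ℂ) * Complex.I)) ^ (1/2 : ℂ)).im)) < 0 := by
  set z : ℝ → ℂ := fun t => (x : ℂ) + (t : ℂ) * (y : ℂ) * I with hz
  have hz_re (t : ℝ) : (z t).re = x := by simp [hz]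
  have hz_ne (t : ℝ) : z t ≠ 0 := fun h => hx0.ne (by simpa [h] using hz_re t)
  have hw_im {t : ℝ} (ht : 0 < t) : 0 < (1 - 1 / z t).im := by
    rw [im_one_sub_one_div]
    exact div_pos (by simpa [hz] using mul_pos ht hy) (normSq_pos.mpr (hz_ne t))
  have hsqrt_im : ∀ t ∈ Ioc (0 : ℝ) 1, 0 < ((1 - 1 / z t) ^ (1 / 2 : ℂ)).im :=
    fun t ht => im_cpow_half_pos (hw_im ht.1)
  refine ⟨hsqrt_im, neg_lt_zero.mpr ?_⟩
  apply intervalIntegral_pos_of_continuousOn_Ioc_of_bounded zero_lt_one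
    (M := y ^ 2 * √(1 + 1 / x))
  · have hw_cont : Continuous fun t => 1 - 1 / z t :=
      continuous_const.sub (continuous_const.div (by fun_prop) hz_ne)
    refine ContinuousOn.mul (by fun_prop) (continuous_im.comp_continuousOn fun t ht => ?_)
    exact (hw_cont.continuousAt.cpow continuousAt_const
      (Or.inr (hw_im ht.1).ne')).continuousWithinAt
  · intro t ht
    have hsqrt_le : √(1 - t ^ 2) ≤ 1 := Real.sqrt_le_one.mpr (by nlinarith [ht.1, ht.2])
    have hw_norm : ‖1 - 1 / z t‖ ≤ 1 + 1 / x :=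
      hz_re t ▸ norm_one_sub_one_div_le (by rw [hz_re]; exact hx0)
    have him_le : |((1 - 1 / z t) ^ (1 / 2 : ℂ)).im| ≤ √(1 + 1 / x) :=
      (abs_im_cpow_half_le _).trans (Real.sqrt_le_sqrt hw_norm)
    rw [abs_mul, abs_mul, abs_of_nonneg (sq_nonneg y), abs_of_nonneg (Real.sqrt_nonneg _)]
    calc y ^ 2 * √(1 - t ^ 2) * |((1 - 1 / z t) ^ (1 / 2 : ℂ)).im|
        ≤ y ^ 2 * 1 * √(1 + 1 / x) := by gcongr
      _ = y ^ 2 * √(1 + 1 / x) := by ring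
  · intro t ht
    have hsqrt_pos : 0 < √(1 - t ^ 2) := Real.sqrt_pos.mpr (by nlinarith [ht.1, ht.2])
    have := hsqrt_im t (Ioo_subset_Ioc_self ht)
    positivity
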